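/- Let w, w' ∈ G(e,e,n) with reduced expression x_1 x_2 ⋯ x_r of w' over X. Then w' ≼ w (i.e., w = w'w'' with ℓ(w) = ℓ(w') + ℓ(w'')) if and only if for all 1 ≤ i ≤ r, ℓ(x_i x_{i-1} ⋯ x_1 w) = ℓ(x_{i-1} ⋯ x_1 w) − 1. -/

import Mathlib

open Matrix Complex
open scoped Classical

/-- `ζ_e = exp(2πi/e)`. -/
noncomputable def zeta (e : ℕ) : ℂ := Complex.exp (2 * Real.pi * Complex.I / e)

/-- The generator `t_i` of `G(e,e,n)`: the monomial matrix with upper-left `2×2` block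
`[[0, ζ_e^{-i}],[ζ_e^i, 0]]` and identity elsewhere. -/
noncomputable def tmat (e n : ℕ) (i : ℤ) : Matrix (Fin n) (Fin n) ℂ :=
  Matrix.of fun a b =>
    if (a : ℕ) = 0 ∧ (b : ℕ) = 1 then zeta e ^ (-i)
    else if (a : ℕ) = 1 ∧ (b : ℕ) = 0 then zeta e ^ i
    else if a = b ∧ 2 ≤ (a : ℕ) then 1 else 0

/-- The generator `s_j` of `G(e,e,n)`: the permutation matrix of the transposition
exchanging coordinates `j-1` and `j` (1-indexed), i.e. indices `j-2` and `j-1` (0-indexed). -/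
def smat (n : ℕ) (j : ℕ) : Matrix (Fin n) (Fin n) ℂ :=
  Matrix.of fun a b =>
    if (a : ℕ) = j - 2 ∧ (b : ℕ) = j - 1 then 1
    else if (a : ℕ) = j - 1 ∧ (b : ℕ) = j - 2 then 1
    else if a = b ∧ (a : ℕ) ≠ j - 2 ∧ (a : ℕ) ≠ j - 1 then 1 else 0

/-- The generating set `X = {t_0, …, t_{e-1}, s_3, …, s_n}` of `G(e,e,n)`. -/
noncomputable def Xset (e n : ℕ) : Set (Matrix (Fin n) (Fin n) ℂ) :=
  {w | (∃ i : ℕ, i < e ∧ w = tmat e n i) ∨ (∃ j : ℕ, 3 ≤ j ∧ j ≤ n ∧ w = smat n j)}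

/-- Membership in `G(e,e,n)`: `w` is monomial, its nonzero entries are `e`-th roots of
unity, and the product of its nonzero entries is `1`. -/
def IsGeen (e n : ℕ) (w : Matrix (Fin n) (Fin n) ℂ) : Prop :=
  (∀ i, ∃! j, w i j ≠ 0) ∧ (∀ j, ∃! i, w i j ≠ 0) ∧
  (∀ i j, w i j ≠ 0 → w i j ^ e = 1) ∧
  (∏ i, ∏ j, (if w i j ≠ 0 then w i j else 1)) = 1

/-- The length `ℓ(w)` of `w` over the generating set `X` (all generators are
involutions, so positive words suffice). -/
noncomputable def len (e n : ℕ) (w : Matrix (Fin n) (Fin n) ℂ) : ℕ :=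
  sInf {r | ∃ l : List (Matrix (Fin n) (Fin n) ℂ),
    (∀ x ∈ l, x ∈ Xset e n) ∧ l.length = r ∧ l.prod = w}

/-- Left divisibility: `w' ≼ w` iff `w = w' w''` with `w'' ∈ G(e,e,n)` and
`ℓ(w) = ℓ(w') + ℓ(w'')`. -/
noncomputable def ldvd (e n : ℕ) (w' w : Matrix (Fin n) (Fin n) ℂ) : Prop :=
  ∃ w'', IsGeen e n w'' ∧ w = w' * w'' ∧ len e n w = len e n w' + len e n w''

/-- Right divisibility: `w' ≼_r w` iff `w = w'' w'` with `w'' ∈ G(e,e,n)` and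
`ℓ(w) = ℓ(w'') + ℓ(w')`. -/
noncomputable def rdvd (e n : ℕ) (w' w : Matrix (Fin n) (Fin n) ℂ) : Prop :=
  ∃ w'', IsGeen e n w'' ∧ w = w'' * w' ∧ len e n w = len e n w'' + len e n w'

/-- The element `λ = diag(ζ_e^{-(n-1)}, ζ_e, …, ζ_e)`. -/
noncomputable def lam (e n : ℕ) : Matrix (Fin n) (Fin n) ℂ :=
  Matrix.diagonal (fun i => if (i : ℕ) = 0 then zeta e ^ (-(n - 1 : ℤ)) else zeta e)

/-! Write `p_k = x_1 ⋯ x_k`, so that `x_k ⋯ x_1 = p_k⁻¹` because the generators are involutions.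
If `w = w' w''` is length-additive, then `p_k⁻¹ w = x_{k+1} ⋯ x_r w''`, whose length is squeezed
between `ℓ(w) - k` (as `w = p_k (p_k⁻¹ w)`) and `(r - k) + ℓ(w'')`, which agree; so each letter
lowers the length by one. Conversely, if every letter lowers the length, then
`ℓ(p_r⁻¹ w) = ℓ(w) - r`, and `w'' = w'⁻¹ w` witnesses `w' ≼ w`. -/

section WordLength

variable {M : Type*} [Monoid M]

/-- Junk value `0` when `u` is not a product of elements of `S`. -/
noncomputable def wordLength (S : Set M) (u : M) : ℕ :=
  sInf {r | ∃ l : List M, (∀ x ∈ l, x ∈ S) ∧ l.length = r ∧ l.prod = u}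

variable {S : Set M}

theorem wordLength_list_prod_le {l : List M} (hl : ∀ x ∈ l, x ∈ S) :
    wordLength S l.prod ≤ l.length :=
  Nat.sInf_le ⟨l, hl, rfl, rfl⟩

theorem exists_list_length_eq_wordLength {u : M} (hu : u ∈ Submonoid.closure S) :
    ∃ l : List M, (∀ x ∈ l, x ∈ S) ∧ l.length = wordLength S u ∧ l.prod = u := by
  obtain ⟨l, hl, rfl⟩ := Submonoid.exists_list_of_mem_closure hu
  exact Nat.sInf_mem (s := {r | ∃ m : List M, (∀ x ∈ m, x ∈ S) ∧ m.length = r ∧ m.prod = l.prod})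
    ⟨l.length, l, hl, rfl, rfl⟩

theorem mem_closure_of_wordLength_ne_zero {u : M} (h : wordLength S u ≠ 0) :
    u ∈ Submonoid.closure S := by
  unfold wordLength at h
  obtain ⟨r, l, hl, -, rfl⟩ := Nat.nonempty_of_pos_sInf (Nat.pos_of_ne_zero h)
  exact Submonoid.list_prod_mem _ fun x hx => Submonoid.subset_closure (hl x hx)

theorem wordLength_list_prod_mul_le {l : List M} (hl : ∀ x ∈ l, x ∈ S) {v : M}
    (hv : v ∈ Submonoid.closure S) :
    wordLength S (l.prod * v) ≤ l.length + wordLength S v := by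
  obtain ⟨m, hm, hlen, rfl⟩ := exists_list_length_eq_wordLength hv
  rw [← hlen, ← List.length_append, ← List.prod_append]
  exact wordLength_list_prod_le fun x hx => (List.mem_append.1 hx).elim (hl x) (hm x)

theorem list_prod_mul_reverse_prod_eq_one {l : List M} (h : ∀ x ∈ l, x * x = 1) :
    l.prod * l.reverse.prod = 1 := by
  induction l with
  | nil => simp
  | cons x l ih =>
    rw [List.prod_cons, List.reverse_cons, List.prod_append, List.prod_singleton, mul_assoc,
      ← mul_assoc l.prod, ih fun y hy => h y (List.mem_cons_of_mem x hy), one_mul,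
      h x List.mem_cons_self]

theorem reverse_prod_mul_list_prod_eq_one {l : List M} (h : ∀ x ∈ l, x * x = 1) :
    l.reverse.prod * l.prod = 1 := by
  simpa using list_prod_mul_reverse_prod_eq_one (l := l.reverse) (by simpa using h)

theorem wordLength_reverse_take_prod_mul (hS : ∀ x ∈ S, x * x = 1) {l : List M}
    (hl : ∀ x ∈ l, x ∈ S) {v : M} (hv : v ∈ Submonoid.closure S)
    (hlen : wordLength S (l.prod * v) = l.length + wordLength S v) {k : ℕ} (hk : k ≤ l.length) :
    wordLength S ((l.take k).reverse.prod * (l.prod * v)) = l.length - k + wordLength S v := by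
  have htake : ∀ x ∈ l.take k, x ∈ S := fun x hx => hl x (List.mem_of_mem_take hx)
  have hdrop : ∀ x ∈ l.drop k, x ∈ S := fun x hx => hl x (List.mem_of_mem_drop hx)
  have hsplit : l.prod = (l.take k).prod * (l.drop k).prod := by
    rw [← List.prod_append, List.take_append_drop]
  have hcancel : (l.take k).reverse.prod * (l.prod * v) = (l.drop k).prod * v := by
    rw [hsplit, mul_assoc, ← mul_assoc,
      reverse_prod_mul_list_prod_eq_one fun x hx => hS x (htake x hx), one_mul]
  have hupper := wordLength_list_prod_mul_le hdrop hv
  have hlower := wordLength_list_prod_mul_le htake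
    (Submonoid.mul_mem _ (Submonoid.list_prod_mem _ fun x hx =>
      Submonoid.subset_closure (hdrop x hx)) hv)
  rw [← mul_assoc, ← hsplit] at hlower
  rw [hcancel]
  simp only [List.length_take, List.length_drop] at hupper hlower
  omega

theorem exists_mul_wordLength_eq_add_iff (hS : ∀ x ∈ S, x * x = 1) {l : List M}
    (hl : ∀ x ∈ l, x ∈ S) (w : M) :
    (∃ v, w = l.prod * v ∧ wordLength S w = l.length + wordLength S v) ↔
      ∀ i < l.length, wordLength S ((l.take (i + 1)).reverse.prod * w) + 1 =
        wordLength S ((l.take i).reverse.prod * w) := by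
  have hinv : ∀ x ∈ l, x * x = 1 := fun x hx => hS x (hl x hx)
  constructor
  · rintro ⟨v, rfl, hlen⟩ i hi
    -- `ℓ(w) ≠ 0` excludes the junk value, so `w`, and with it `v = w'⁻¹ w`, is a product of
    -- generators.
    have hw : l.prod * v ∈ Submonoid.closure S := mem_closure_of_wordLength_ne_zero (by omega)
    have hv : v ∈ Submonoid.closure S := by
      rw [← one_mul v, ← reverse_prod_mul_list_prod_eq_one hinv, mul_assoc]
      exact Submonoid.mul_mem _ (Submonoid.list_prod_mem _ fun x hx =>
        Submonoid.subset_closure (hl x (List.mem_reverse.1 hx))) hw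
    rw [wordLength_reverse_take_prod_mul hS hl hv hlen hi,
      wordLength_reverse_take_prod_mul hS hl hv hlen hi.le]
    omega
  · intro H
    have hdescent : ∀ k ≤ l.length,
        wordLength S ((l.take k).reverse.prod * w) + k = wordLength S w := by
      intro k hk
      induction k with
      | zero => simp
      | succ k ih => have := H k hk; have := ih (by omega); omega
    refine ⟨l.reverse.prod * w, ?_, ?_⟩
    · rw [← mul_assoc, list_prod_mul_reverse_prod_eq_one hinv, one_mul]
    · have := hdescent l.length le_rfl
      rw [List.take_length] at this
      omega

end WordLength

section MonomialMatrix

variable {ι R : Type*} [DecidableEq ι] [Semiring R]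

def monomialMatrix (σ : Equiv.Perm ι) (c : ι → R) : Matrix ι ι R :=
  Matrix.of fun i j => if j = σ i then c i else 0

theorem monomialMatrix_mul [Fintype ι] (σ τ : Equiv.Perm ι) (c d : ι → R) :
    monomialMatrix σ c * monomialMatrix τ d =
      monomialMatrix (σ.trans τ) fun i => c i * d (σ i) := by
  ext i j
  rw [Matrix.mul_apply, Finset.sum_eq_single (σ i)]
  · simp only [monomialMatrix, Matrix.of_apply, Equiv.trans_apply, if_pos, mul_ite, mul_zero]
    congr
  · intro k _ hk
    simp [monomialMatrix, hk]
  · simp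

theorem monomialMatrix_refl_one : monomialMatrix (Equiv.refl ι) (fun _ => (1 : R)) = 1 := by
  ext i j
  simp [monomialMatrix, Matrix.one_apply, eq_comm]

theorem monomialMatrix_swap_mul_self [Fintype ι] (a b : ι) (c : ι → R)
    (hc : ∀ i, c i * c (Equiv.swap a b i) = 1) :
    monomialMatrix (Equiv.swap a b) c * monomialMatrix (Equiv.swap a b) c = 1 := by
  rw [monomialMatrix_mul, Equiv.swap_swap, funext hc, monomialMatrix_refl_one]

end MonomialMatrix

section Geen

variable {e n : ℕ}

theorem isGeen_monomialMatrix (σ : Equiv.Perm (Fin n)) {c : Fin n → ℂ}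
    (hc : ∀ i, c i ≠ 0) (hce : ∀ i, c i ^ e = 1) (hprod : ∏ i, c i = 1) :
    IsGeen e n (monomialMatrix σ c) := by
  have hsupp : ∀ i j, monomialMatrix σ c i j ≠ 0 ↔ j = σ i := by
    intro i j
    by_cases h : j = σ i <;> simp [monomialMatrix, h, hc i]
  refine ⟨fun i => ⟨σ i, (hsupp i _).2 rfl, fun j hj => (hsupp i j).1 hj⟩,
    fun j => ⟨σ.symm j, (hsupp _ j).2 (by simp), fun i hi => by simp [(hsupp i j).1 hi]⟩,
    fun i j hij => ?_, ?_⟩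
  · obtain rfl := (hsupp i j).1 hij
    simpa [monomialMatrix] using hce i
  · refine (Finset.prod_congr rfl fun i _ => ?_).trans hprod
    rw [Finset.prod_eq_single (σ i) (fun j _ hj => by simp [(hsupp i j).not.2 hj]) (by simp)]
    simp [monomialMatrix, hc i]

theorem IsGeen.exists_eq_monomialMatrix {A : Matrix (Fin n) (Fin n) ℂ} (hA : IsGeen e n A) :
    ∃ (σ : Equiv.Perm (Fin n)) (c : Fin n → ℂ),
      (∀ i, c i ≠ 0) ∧ (∀ i, c i ^ e = 1) ∧ ∏ i, c i = 1 ∧ A = monomialMatrix σ c := by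
  obtain ⟨hrow, hcol, hpow, hprod⟩ := hA
  choose f hf hsupp using hrow
  have hinj : Function.Injective f := fun i i' h =>
    (hcol (f i)).unique (hf i) (h ▸ hf i')
  let σ : Equiv.Perm (Fin n) := Equiv.ofBijective f (Finite.injective_iff_bijective.1 hinj)
  have hzero : ∀ i j, j ≠ f i → A i j = 0 := fun i j hj => by_contra fun h => hj (hsupp i j h)
  refine ⟨σ, fun i => A i (f i), hf, fun i => hpow _ _ (hf i), ?_, ?_⟩
  · refine (Finset.prod_congr rfl fun i _ => ?_).trans hprod
    rw [Finset.prod_eq_single (f i) (fun j _ hj => by simp [hzero i j hj]) (by simp)]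
    simp [hf i]
  · ext i j
    by_cases h : j = f i
    · simp [monomialMatrix, h, σ]
    · simp [monomialMatrix, hzero i j h, σ, h]

theorem IsGeen.mul {A B : Matrix (Fin n) (Fin n) ℂ} (hA : IsGeen e n A) (hB : IsGeen e n B) :
    IsGeen e n (A * B) := by
  obtain ⟨σ, c, hc, hce, hcp, rfl⟩ := hA.exists_eq_monomialMatrix
  obtain ⟨τ, d, hd, hde, hdp, rfl⟩ := hB.exists_eq_monomialMatrix
  rw [monomialMatrix_mul]
  refine isGeen_monomialMatrix _ (fun i => mul_ne_zero (hc i) (hd _))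
    (fun i => by rw [mul_pow, hce, hde, one_mul]) ?_
  rw [Finset.prod_mul_distrib, hcp, one_mul, Equiv.prod_comp σ d, hdp]

theorem isGeen_one : IsGeen e n 1 := by
  rw [← monomialMatrix_refl_one]
  exact isGeen_monomialMatrix _ (fun _ => one_ne_zero) (fun _ => one_pow e) (by simp)

def geenSubmonoid (e n : ℕ) : Submonoid (Matrix (Fin n) (Fin n) ℂ) where
  carrier := {w | IsGeen e n w}
  mul_mem' := IsGeen.mul
  one_mem' := isGeen_one

theorem zeta_ne_zero (e : ℕ) : zeta e ≠ 0 := Complex.exp_ne_zero _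

theorem zeta_zpow_pow (e : ℕ) (i : ℤ) : (zeta e ^ i) ^ e = 1 := by
  rcases eq_or_ne e 0 with rfl | he
  · exact pow_zero _
  · have hζ : zeta e ^ e = 1 := (Complex.isPrimitiveRoot_exp e he).pow_eq_one
    rw [← zpow_natCast, ← _root_.zpow_mul, mul_comm, _root_.zpow_mul, zpow_natCast, hζ,
      _root_.one_zpow]

variable (e) in
/-- The nonzero entries of `t_i`, indexed by row. -/
noncomputable def tcoef (hn : 2 ≤ n) (i : ℤ) : Fin n → ℂ :=
  fun a => if a = ⟨0, by omega⟩ then zeta e ^ (-i) else if a = ⟨1, by omega⟩ then zeta e ^ i else 1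

theorem tmat_eq_monomialMatrix (hn : 2 ≤ n) (i : ℤ) :
    tmat e n i = monomialMatrix (Equiv.swap ⟨0, by omega⟩ ⟨1, by omega⟩) (tcoef e hn i) := by
  ext a b
  simp only [tmat, monomialMatrix, tcoef, Matrix.of_apply, Equiv.swap_apply_def, Fin.ext_iff]
  have ha := a.isLt
  have hb := b.isLt
  split_ifs <;> dsimp -failIfUnchanged only at * <;> first | rfl | omega

theorem smat_eq_monomialMatrix {j : ℕ} (hj : 3 ≤ j) (hjn : j ≤ n) :
    smat n j = monomialMatrix (Equiv.swap ⟨j - 2, by omega⟩ ⟨j - 1, by omega⟩) fun _ => 1 := by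
  ext a b
  simp only [smat, monomialMatrix, Matrix.of_apply, Equiv.swap_apply_def, Fin.ext_iff]
  have ha := a.isLt
  have hb := b.isLt
  split_ifs <;> dsimp -failIfUnchanged only at * <;> first | rfl | omega

theorem tcoef_prod (hn : 2 ≤ n) (i : ℤ) : ∏ a, tcoef e hn i a = 1 := by
  have hsplit : ∀ a, tcoef e hn i a =
      (if a = ⟨0, by omega⟩ then zeta e ^ (-i) else 1) *
      (if a = ⟨1, by omega⟩ then zeta e ^ i else 1) := by
    intro a
    by_cases h0 : a = ⟨0, by omega⟩ <;> by_cases h1 : a = ⟨1, by omega⟩ <;> simp_all [tcoef]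
  rw [Finset.prod_congr rfl fun a _ => hsplit a, Finset.prod_mul_distrib, Finset.prod_ite_eq',
    Finset.prod_ite_eq', if_pos (Finset.mem_univ _), if_pos (Finset.mem_univ _),
    ← zpow_add₀ (zeta_ne_zero e), neg_add_cancel, zpow_zero]

theorem tcoef_mul_tcoef_swap (hn : 2 ≤ n) (i : ℤ) (a : Fin n) :
    tcoef e hn i a * tcoef e hn i (Equiv.swap ⟨0, by omega⟩ ⟨1, by omega⟩ a) = 1 := by
  have hζ : zeta e ^ i ≠ 0 := zpow_ne_zero _ (zeta_ne_zero e)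
  by_cases h0 : a = ⟨0, by omega⟩
  · subst h0
    simp [tcoef, Fin.ext_iff, hζ]
  by_cases h1 : a = ⟨1, by omega⟩
  · subst h1
    simp [tcoef, Fin.ext_iff, hζ]
  · simp [tcoef, Equiv.swap_apply_of_ne_of_ne h0 h1, h0, h1]

theorem isGeen_of_mem_Xset (hn : 2 ≤ n) {x : Matrix (Fin n) (Fin n) ℂ} (hx : x ∈ Xset e n) :
    IsGeen e n x := by
  rcases hx with ⟨i, -, rfl⟩ | ⟨j, hj, hjn, rfl⟩
  · rw [tmat_eq_monomialMatrix hn]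
    refine isGeen_monomialMatrix _ (fun a => ?_) (fun a => ?_) (tcoef_prod hn i) <;>
      unfold tcoef <;> split_ifs <;>
      first
        | exact zpow_ne_zero _ (zeta_ne_zero e)
        | exact one_ne_zero
        | exact zeta_zpow_pow e _
        | exact one_pow e
  · rw [smat_eq_monomialMatrix hj hjn]
    exact isGeen_monomialMatrix _ (fun _ => one_ne_zero) (fun _ => one_pow e) (by simp)

theorem mul_self_of_mem_Xset (hn : 2 ≤ n) {x : Matrix (Fin n) (Fin n) ℂ} (hx : x ∈ Xset e n) :
    x * x = 1 := by
  rcases hx with ⟨i, -, rfl⟩ | ⟨j, hj, hjn, rfl⟩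
  · rw [tmat_eq_monomialMatrix hn]
    exact monomialMatrix_swap_mul_self _ _ _ (tcoef_mul_tcoef_swap hn i)
  · rw [smat_eq_monomialMatrix hj hjn]
    exact monomialMatrix_swap_mul_self _ _ _ fun _ => one_mul 1

theorem len_eq_wordLength (e n : ℕ) : len e n = wordLength (Xset e n) := rfl

end Geen

theorem statement_11_general (e n : ℕ) (hn : 2 ≤ n)
    (w w' : Matrix (Fin n) (Fin n) ℂ) (hw : IsGeen e n w)
    (l : List (Matrix (Fin n) (Fin n) ℂ)) (hl : ∀ x ∈ l, x ∈ Xset e n)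
    (hprod : l.prod = w') (hred : l.length = len e n w') :
    ldvd e n w' w ↔
      ∀ i < l.length,
        len e n ((l.take (i + 1)).reverse.prod * w) + 1
          = len e n ((l.take i).reverse.prod * w) := by
  have hS : ∀ x ∈ Xset e n, x * x = 1 := fun x hx => mul_self_of_mem_Xset hn hx
  subst hprod
  rw [ldvd]
  simp only [len_eq_wordLength] at hred ⊢
  rw [← exists_mul_wordLength_eq_add_iff hS hl w, ← hred]
  constructor
  · rintro ⟨v, -, hv⟩
    exact ⟨v, hv⟩
  · rintro ⟨v, rfl, hlen⟩
    refine ⟨v, ?_, rfl, hlen⟩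
    have hv : v = l.reverse.prod * (l.prod * v) := by
      rw [← mul_assoc, reverse_prod_mul_list_prod_eq_one fun x hx => hS x (hl x hx), one_mul]
    rw [hv]
    exact (geenSubmonoid e n).mul_mem ((geenSubmonoid e n).list_prod_mem fun x hx =>
      isGeen_of_mem_Xset hn (hl x (List.mem_reverse.1 hx))) hw

/-- `w' ≼ w` iff for each prefix of a reduced expression
`x_1 x_2 ⋯ x_r` of `w'`, left multiplication of `w` by the next letter decreases
the length: `ℓ(x_i ⋯ x_1 w) = ℓ(x_{i-1} ⋯ x_1 w) - 1` for all `1 ≤ i ≤ r`. -/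
theorem statement_11 (e n : ℕ) (he : 1 ≤ e) (hn : 2 ≤ n)
    (w w' : Matrix (Fin n) (Fin n) ℂ) (hw : IsGeen e n w) (hw' : IsGeen e n w')
    (l : List (Matrix (Fin n) (Fin n) ℂ)) (hl : ∀ x ∈ l, x ∈ Xset e n)
    (hprod : l.prod = w') (hred : l.length = len e n w') :
    ldvd e n w' w ↔
      ∀ i < l.length,
        len e n ((l.take (i + 1)).reverse.prod * w) + 1
          = len e n ((l.take i).reverse.prod * w) :=
  statement_11_general e n hn w w' hw l hl hprod hred
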